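/- arXiv:1207.6333 — 8 statements merged into one kernel-verified Lean document; each statement's English description precedes it below -/
import Mathlib

section
/- Let k be a field and f ∈ k[x_1,…,x_n] a nonconstant polynomial. Then there exist natural numbers N_1,…,N_{n-1} such that the k-algebra automorphism of k[x_1,…,x_n] sending x_i ↦ x_i + x_n^{N_i} for i < n and x_n ↦ x_n maps f to a polynomial which is, up to a nonzero scalar, monic in x_n with coefficients in k[x_1,…,x_{n-1}]. -/
/-!
Nagata's trick. Substituting `X i.succ ↦ X i.succ + X 0 ^ r ^ (i + 1)` sends the monomial with
exponent vector `d` to a polynomial in `X 0` that is monic of degree `∑ j, d j * r ^ j`. If `r`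
exceeds every exponent occurring in `f`, these degrees are distinct base-`r` expansions, so a
single monomial of `f` attains the top degree and its coefficient is the leading coefficient.
-/

open MvPolynomial

theorem Finsupp.weight_pow_injOn {m b : ℕ} (hb : 1 < b) :
    Set.InjOn (Finsupp.weight fun i : Fin m => b ^ (i : ℕ)) {d | ∀ i, d i < b} := by
  intro d hd e he hde
  refine Finsupp.ext <| congrFun <| List.ofFn_inj.mp ?_
  refine Nat.ofDigits_inj_of_len_eq hb (by simp) (by simpa using hd) (by simpa using he) ?_
  simpa [Nat.ofDigits_eq_sum_mapIdx, List.mapIdx_eq_ofFn, List.sum_ofFn, Finsupp.weight_eq_sum]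
    using hde

namespace Polynomial
variable {σ A : Type*} [CommRing A] {g : σ → A[X]}

theorem monic_finsuppProd_pow (hg : ∀ j, (g j).Monic) (d : σ →₀ ℕ) :
    (d.prod fun j e => g j ^ e).Monic :=
  monic_prod_of_monic _ _ fun j _ => (hg j).pow _

theorem natDegree_finsuppProd_pow [Nontrivial A] (hg : ∀ j, (g j).Monic) (d : σ →₀ ℕ) :
    (d.prod fun j e => g j ^ e).natDegree = Finsupp.weight (fun j => (g j).natDegree) d := by
  rw [Finsupp.prod, natDegree_prod_of_monic _ _ fun j _ => (hg j).pow _, Finsupp.weight_apply]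
  simp only [(hg _).natDegree_pow, smul_eq_mul]
  rfl

end Polynomial

theorem MvPolynomial.exists_leadingCoeff_aeval_eq {σ R A : Type*} [CommRing R] [CommRing A]
    [Nontrivial A] [Algebra R A] (hR : Function.Injective (algebraMap R A))
    {g : σ → Polynomial A} (hg : ∀ j, (g j).Monic) {p : MvPolynomial σ R} (hp : p ≠ 0)
    (hinj : Set.InjOn (Finsupp.weight fun j => (g j).natDegree) (p.support : Set (σ →₀ ℕ))) :
    ∃ d ∈ p.support, (aeval g p).leadingCoeff = algebraMap R A (p.coeff d) := by
  set w : (σ →₀ ℕ) →+ ℕ := Finsupp.weight fun j => (g j).natDegree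
  set P : (σ →₀ ℕ) → Polynomial A := fun d => d.prod fun j e => g j ^ e
  have hP : ∀ d, (P d).natDegree = w d := Polynomial.natDegree_finsuppProd_pow hg
  obtain ⟨d₀, hd₀, hmax⟩ := p.support.exists_max_image w (support_nonempty.mpr hp)
  have hsum :
      aeval g p = ∑ d ∈ p.support, Polynomial.C (algebraMap R A (p.coeff d)) * P d := by
    conv_lhs => rw [p.as_sum, map_sum]
    simp only [aeval_monomial, Polynomial.algebraMap_apply, P]
  have hcoeff : (aeval g p).coeff (w d₀) = algebraMap R A (p.coeff d₀) := by
    rw [hsum, Polynomial.finsetSum_coeff, Finset.sum_eq_single_of_mem d₀ hd₀]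
    · rw [Polynomial.coeff_C_mul, ← hP, (Polynomial.monic_finsuppProd_pow hg d₀).coeff_natDegree,
        mul_one]
    · intro d hd hne
      have hlt : (P d).natDegree < w d₀ := (hP d).trans_lt <|
        (hmax d hd).lt_of_ne fun h => hne (hinj hd hd₀ h)
      rw [Polynomial.coeff_C_mul, Polynomial.coeff_eq_zero_of_natDegree_lt hlt, mul_zero]
  have hdeg : (aeval g p).natDegree ≤ w d₀ := by
    rw [hsum]
    refine Polynomial.natDegree_sum_le_of_forall_le _ _ fun d hd => ?_
    exact (Polynomial.natDegree_C_mul_le _ _).trans ((hP d).trans_le (hmax d hd))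
  have hne : (aeval g p).coeff (w d₀) ≠ 0 := by
    rw [hcoeff]
    exact (map_ne_zero_iff _ hR).mpr (mem_support_iff.mp hd₀)
  refine ⟨d₀, hd₀, ?_⟩
  rw [Polynomial.leadingCoeff, Polynomial.natDegree_eq_of_le_of_coeff_ne_zero hdeg hne, hcoeff]

namespace MvPolynomial
variable {R : Type*} [CommRing R] {n : ℕ}

noncomputable def nagataEquiv (N : Fin n → ℕ) :
    MvPolynomial (Fin (n + 1)) R ≃ₐ[R] MvPolynomial (Fin (n + 1)) R :=
  AlgEquiv.ofAlgHom (aeval (Fin.cons (X 0) fun i => X i.succ + X 0 ^ N i))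
    (aeval (Fin.cons (X 0) fun i => X i.succ - X 0 ^ N i))
    (algHom_ext fun j => j.cases (by simp) fun i => by simp)
    (algHom_ext fun j => j.cases (by simp) fun i => by simp)

variable (N : Fin n → ℕ)

@[simp]
theorem nagataEquiv_X_zero : nagataEquiv N (X 0 : MvPolynomial (Fin (n + 1)) R) = X 0 := by
  simp [nagataEquiv]

@[simp]
theorem nagataEquiv_X_succ (i : Fin n) :
    nagataEquiv N (X i.succ : MvPolynomial (Fin (n + 1)) R) = X i.succ + X 0 ^ N i := by
  simp [nagataEquiv]

theorem finSuccEquiv_nagataEquiv (p : MvPolynomial (Fin (n + 1)) R) :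
    finSuccEquiv R n (nagataEquiv N p) =
      aeval (Fin.cons Polynomial.X fun i => Polynomial.X ^ N i + Polynomial.C (X i)) p := by
  have : (finSuccEquiv R n).toAlgHom.comp (nagataEquiv (R := R) N).toAlgHom =
      aeval (Fin.cons Polynomial.X fun i => Polynomial.X ^ N i + Polynomial.C (X i)) :=
    algHom_ext fun j => j.cases (by simp [finSuccEquiv_X_zero])
      fun i => by simp [finSuccEquiv_X_zero, finSuccEquiv_X_succ, add_comm]
  exact DFunLike.congr_fun this p

theorem exists_leadingCoeff_finSuccEquiv_nagataEquiv [Nontrivial R]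
    {p : MvPolynomial (Fin (n + 1)) R} (hp : p ≠ 0) {r : ℕ} (hr : 1 < r)
    (hpr : ∀ d ∈ p.support, ∀ j, d j < r) :
    ∃ d ∈ p.support,
      (finSuccEquiv R n (nagataEquiv (fun i => r ^ (i.succ : ℕ)) p)).leadingCoeff =
        C (p.coeff d) := by
  set g : Fin (n + 1) → Polynomial (MvPolynomial (Fin n) R) :=
    Fin.cons Polynomial.X fun i => Polynomial.X ^ r ^ (i.succ : ℕ) + Polynomial.C (X i)
  have hg : ∀ j, (g j).Monic := fun j => j.cases (by simp [g])
    fun i => by simpa [g] using Polynomial.monic_X_pow_add_C _ (pow_ne_zero _ (by omega))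
  have hdeg : ∀ j, (g j).natDegree = r ^ (j : ℕ) := fun j => j.cases (by simp [g])
    fun i => by simp [g]
  have hinj : Set.InjOn (Finsupp.weight fun j => (g j).natDegree)
      (p.support : Set (Fin (n + 1) →₀ ℕ)) := by
    simp only [hdeg]
    exact (Finsupp.weight_pow_injOn hr).mono hpr
  rw [finSuccEquiv_nagataEquiv]
  exact exists_leadingCoeff_aeval_eq (C_injective _ _) hg hp hinj

end MvPolynomial

/-- Let `k` be a field and `f ∈ k[x₀, x₁, …, xₙ]` a nonconstant polynomial
(here the distinguished variable "xₙ" of the paper is the variable `X 0`, so that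
`finSuccEquiv` exhibits a polynomial as a polynomial in the distinguished variable with
coefficients in the polynomial ring on the remaining variables).  Then there are natural
numbers `N i` and a `k`-algebra automorphism `σ` sending `X i.succ ↦ X i.succ + (X 0) ^ N i`
and fixing `X 0`, such that `σ f`, viewed as a polynomial in the distinguished variable,
has leading coefficient a nonzero constant (i.e. `σ f` is monic up to a nonzero scalar). -/
theorem unfolding_stmt0 (k : Type*) [Field k] (n : ℕ)
    (f : MvPolynomial (Fin (n + 1)) k) (hf : ∀ c : k, f ≠ C c) :
    ∃ (N : Fin n → ℕ)
      (σ : MvPolynomial (Fin (n + 1)) k ≃ₐ[k] MvPolynomial (Fin (n + 1)) k),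
      σ (X 0) = X 0 ∧
      (∀ i : Fin n, σ (X i.succ) = X i.succ + (X 0) ^ N i) ∧
      ∃ c : k, c ≠ 0 ∧ (finSuccEquiv k n (σ f)).leadingCoeff = C c := by
  have hf0 : f ≠ 0 := by simpa using hf 0
  have hexp : ∀ d ∈ f.support, ∀ j, d j < f.totalDegree + 2 := fun d hd j =>
    ((monomial_le_degreeOf j hd).trans (degreeOf_le_totalDegree f j)).trans_lt (by omega)
  obtain ⟨d, hd, hlc⟩ := exists_leadingCoeff_finSuccEquiv_nagataEquiv hf0 (by omega) hexp
  exact ⟨_, nagataEquiv _, nagataEquiv_X_zero _, nagataEquiv_X_succ _, coeff d f,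
    mem_support_iff.mp hd, hlc⟩
end

section
/- Let k be a field, A = k[x_1,…,x_n], and f ∈ A monic in x_n with coefficients in k[x_1,…,x_{n-1}]. Then A is a free module over the subalgebra k[x_1,…,x_{n-1}, f]. -/
/-!
Write `A = R[x]` with `R = k[x₁, …, xₙ₋₁]` and let `p ∈ R[x]` be the monic image of `f`, of
degree `d`; the subalgebra in question becomes `R[p]`. If `d = 0` then `p = 1` and `R[p] = R`.
Otherwise `1, x, …, x^(d-1)` is an `R[p]`-basis of `R[x]`: they span by repeated division with
remainder by `p`, and they are independent because a nonzero term `q(p) xⁱ` with `i < d` has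
degree `d · deg q + i`, so distinct indices give distinct degrees and nothing cancels.
-/

namespace Polynomial

variable {R : Type*} [CommRing R] {p : R[X]}

theorem Monic.natDegree_comp (hp : p.Monic) (q : R[X]) :
    (q.comp p).natDegree = q.natDegree * p.natDegree := by
  rcases eq_or_ne q 0 with rfl | hq
  · simp
  exact natDegree_comp_eq_of_mul_ne_zero (by simpa [hp.leadingCoeff] using hq)

theorem Monic.leadingCoeff_comp (hp : p.Monic) (hd : p.natDegree ≠ 0) (q : R[X]) :
    (q.comp p).leadingCoeff = q.leadingCoeff := by
  rw [Polynomial.leadingCoeff, hp.natDegree_comp, coeff_comp_degree_mul_degree hd, hp.leadingCoeff,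
    one_pow, mul_one]

theorem Monic.comp_eq_zero_iff (hp : p.Monic) (hd : p.natDegree ≠ 0) {q : R[X]} :
    q.comp p = 0 ↔ q = 0 := by
  rw [← leadingCoeff_eq_zero, hp.leadingCoeff_comp hd, leadingCoeff_eq_zero]

theorem Monic.eq_zero_of_sum_comp_mul_X_pow_eq_zero (hp : p.Monic) (hd : p.natDegree ≠ 0)
    {s : Finset (Fin p.natDegree)} {q : Fin p.natDegree → R[X]}
    (h : ∑ i ∈ s, (q i).comp p * X ^ (i : ℕ) = 0) : ∀ i ∈ s, q i = 0 := by
  nontriviality R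
  set term := fun i : Fin p.natDegree => (q i).comp p * X ^ (i : ℕ)
  have term_eq_zero_iff (i) : term i = 0 ↔ q i = 0 := by
    rw [← hp.comp_eq_zero_iff hd (q := q i)]
    exact ⟨mul_X_pow_eq_zero, fun h => by simp [term, h]⟩
  have natDegree_term_mod (i) (hi : q i ≠ 0) : (term i).natDegree % p.natDegree = i := by
    rw [natDegree_mul_X_pow _ ((hp.comp_eq_zero_iff hd).not.2 hi), hp.natDegree_comp,
      Nat.mul_add_mod_self_right, Nat.mod_eq_of_lt i.isLt]
  have pairwise : {i | i ∈ s ∧ term i ≠ 0}.Pairwise (Function.onFun Ne (degree ∘ term)) := by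
    rintro i ⟨-, hi⟩ j ⟨-, hj⟩ hij hdeg
    rw [Ne, term_eq_zero_iff] at hi hj
    refine hij (Fin.ext ?_)
    rw [← natDegree_term_mod i hi, ← natDegree_term_mod j hj,
      natDegree_eq_of_degree_eq hdeg]
  have := degree_sum_eq_of_disjoint term s pairwise
  rw [h, degree_zero, eq_comm, Finset.sup_eq_bot_iff] at this
  exact fun i hi => (term_eq_zero_iff i).1 (degree_eq_bot.1 (this i hi))

theorem Monic.exists_sum_comp_mul_X_pow_eq (hp : p.Monic) (hd : p.natDegree ≠ 0) (g : R[X]) :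
    ∃ q : Fin p.natDegree → R[X], ∑ i, (q i).comp p * X ^ (i : ℕ) = g := by
  have of_natDegree_lt (r : R[X]) (hr : r.natDegree < p.natDegree) :
      ∑ i : Fin p.natDegree, (C (r.coeff i)).comp p * X ^ (i : ℕ) = r := by
    simp_rw [C_comp, C_mul_X_pow_eq_monomial]
    rw [Fin.sum_univ_eq_sum_range (fun i => monomial i (r.coeff i)), ← as_sum_range' r _ hr]
  induction hN : g.natDegree using Nat.strong_induction_on generalizing g with
  | _ N IH =>
    by_cases hlt : N < p.natDegree
    · exact ⟨_, of_natDegree_lt g (hN ▸ hlt)⟩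
    obtain ⟨q, hq⟩ := IH _ (by omega : N - p.natDegree < N) (g /ₘ p)
      (by rw [natDegree_divByMonic g hp, hN])
    have hp_ne_one : p ≠ 1 := fun h => hd (by rw [h, natDegree_one])
    refine ⟨fun i => C ((g %ₘ p).coeff i) + X * q i, ?_⟩
    conv_rhs => rw [← modByMonic_add_div g p, ← hq,
      ← of_natDegree_lt _ (natDegree_modByMonic_lt g hp hp_ne_one)]
    simp only [add_comp, mul_comp, X_comp, add_mul, Finset.sum_add_distrib, Finset.mul_sum,
      mul_assoc]

theorem Monic.linearIndependent_X_pow (hp : p.Monic) (hd : p.natDegree ≠ 0) :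
    LinearIndependent (aeval (R := R) p).range
      (fun i : Fin p.natDegree => (X : R[X]) ^ (i : ℕ)) := by
  rw [linearIndependent_iff']
  intro s c hc i hi
  choose q hq using fun j => (AlgHom.mem_range _).1 (c j).2
  have hsum : ∑ j ∈ s, (q j).comp p * X ^ (j : ℕ) = 0 := by
    simpa [Subalgebra.smul_def, comp_eq_aeval, hq] using hc
  refine Subtype.ext ?_
  rw [← hq, ← comp_eq_aeval, hp.eq_zero_of_sum_comp_mul_X_pow_eq_zero hd hsum i hi, zero_comp]
  rfl

theorem Monic.span_X_pow (hp : p.Monic) (hd : p.natDegree ≠ 0) :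
    ⊤ ≤ Submodule.span (aeval (R := R) p).range
      (Set.range fun i : Fin p.natDegree => (X : R[X]) ^ (i : ℕ)) := by
  rintro g -
  obtain ⟨q, rfl⟩ := hp.exists_sum_comp_mul_X_pow_eq hd g
  refine Submodule.sum_mem _ fun i _ => ?_
  have hmem : (q i).comp p ∈ (aeval (R := R) p).range := ⟨q i, rfl⟩
  rw [show (q i).comp p = ((⟨_, hmem⟩ : (aeval (R := R) p).range) : R[X]) from rfl,
    ← smul_eq_mul, ← Subalgebra.smul_def]
  exact Submodule.smul_mem _ _ (Submodule.subset_span ⟨i, rfl⟩)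

noncomputable def Monic.basisXPow (hp : p.Monic) (hd : p.natDegree ≠ 0) :
    Module.Basis (Fin p.natDegree) (aeval (R := R) p).range R[X] :=
  .mk (hp.linearIndependent_X_pow hd) (hp.span_X_pow hd)

theorem Monic.free_aeval_range (hp : p.Monic) : Module.Free (aeval (R := R) p).range R[X] := by
  by_cases hd : p.natDegree = 0
  · obtain rfl := eq_one_of_monic_natDegree_zero hp hd
    have bijective : Function.Bijective (algebraMap R (aeval (R := R) (1 : R[X])).range) := by
      refine ⟨fun a b h => C_injective (congrArg Subtype.val h), ?_⟩
      rintro ⟨_, q, rfl⟩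
      exact ⟨q.eval 1, Subtype.ext (by simp [← comp_eq_aeval, comp_one])⟩
    exact .of_basis ((basisMonomials R).mapCoeffs (.ofBijective _ bijective)
      fun c x => (Algebra.smul_def c x).symm)
  · exact .of_basis (hp.basisXPow hd)

end Polynomial

theorem Subalgebra.free_of_map_eq {k A B : Type*} [CommSemiring k] [Semiring A]
    [Semiring B] [Algebra k A] [Algebra k B] (e : A ≃ₐ[k] B) {S : Subalgebra k A}
    {T : Subalgebra k B} (hST : S.map (e : A →ₐ[k] B) = T) (hS : Module.Free S A) :
    Module.Free T B := by
  subst hST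
  let σ : S ≃+* S.map (e : A →ₐ[k] B) := e.subalgebraMap S
  have := RingHomInvPair.of_ringEquiv σ
  have := RingHomInvPair.of_ringEquiv_symm σ
  exact .of_equiv (σ := (σ : S →+* S.map (e : A →ₐ[k] B)))
    { e.toLinearEquiv.toAddEquiv with
      map_smul' := fun s a => by simp [Subalgebra.smul_def, σ] }

namespace MvPolynomial

variable {k : Type*} [CommSemiring k] {n : ℕ}

theorem finSuccEquiv_aeval_update_zero (f g : MvPolynomial (Fin (n + 1)) k) :
    finSuccEquiv k n (aeval (R := k) (fun i : Fin (n + 1) => if i = 0 then f else X i) g) =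
      Polynomial.aeval (finSuccEquiv k n f) (finSuccEquiv k n g) := by
  suffices (finSuccEquiv k n).toAlgHom.comp (aeval fun i => if i = 0 then f else X i) =
      ((Polynomial.aeval (finSuccEquiv k n f)).restrictScalars k).comp
        (finSuccEquiv k n).toAlgHom from
    DFunLike.congr_fun this g
  exact algHom_ext fun i => Fin.cases (by simp [finSuccEquiv_X_zero])
    (fun j => by simp [Fin.succ_ne_zero, finSuccEquiv_X_succ]) i

theorem range_aeval_update_zero (f : MvPolynomial (Fin (n + 1)) k) :
    (aeval (R := k) fun i : Fin (n + 1) => if i = 0 then f else X i).range =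
      Subalgebra.map ((finSuccEquiv k n).symm : _ →ₐ[k] MvPolynomial (Fin (n + 1)) k)
        ((Polynomial.aeval (R := MvPolynomial (Fin n) k) (finSuccEquiv k n f)).range
          |>.restrictScalars k) := by
  ext x
  simp only [Subalgebra.mem_map, Subalgebra.mem_restrictScalars, AlgHom.mem_range]
  constructor
  · rintro ⟨g, rfl⟩
    exact ⟨_, ⟨finSuccEquiv k n g, (finSuccEquiv_aeval_update_zero f g).symm⟩,
      (finSuccEquiv k n).symm_apply_apply _⟩
  · rintro ⟨_, ⟨q, rfl⟩, rfl⟩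
    refine ⟨(finSuccEquiv k n).symm q, (finSuccEquiv k n).injective ?_⟩
    rw [finSuccEquiv_aeval_update_zero, AlgEquiv.apply_symm_apply, AlgEquiv.coe_toAlgHom,
      AlgEquiv.apply_symm_apply]

end MvPolynomial

open MvPolynomial

-- The paper's distinguished variable `xₙ` is `X 0` here.
/-- Let `k` be a field, `A = k[x₀, x₁, …, xₙ]` (the distinguished variable
"xₙ" of the paper being `X 0`), and `f ∈ A` monic in the distinguished variable with
coefficients in the polynomial ring on the other variables.  Then `A` is a free module over
the subalgebra `k[x₁, …, xₙ, f]`, realized as the range of the `k`-algebra endomorphism of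
`A` sending the distinguished variable to `f` and fixing the other variables. -/
theorem unfolding_stmt2 (k : Type*) [Field k] (n : ℕ)
    (f : MvPolynomial (Fin (n + 1)) k)
    (hf : (finSuccEquiv k n f).Monic) :
    Module.Free
      (↥(aeval (R := k)
          (fun i : Fin (n + 1) => if i = 0 then f else X i)).range)
      (MvPolynomial (Fin (n + 1)) k) := by
  exact Subalgebra.free_of_map_eq _ (range_aeval_update_zero f).symm hf.free_aeval_range
end

section
/- Let k be a field of characteristic zero and f ∈ A = k[x_1,…,x_n] a nonconstant polynomial. Then A is a free module over B = k[y], where the B-module structure is given by y ↦ f. -/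
/-!
Fix a monomial order and let `α ≠ 0` be the leading exponent of the nonconstant `f`. The monomials
`x^β` with `α ≰ β` form a `k[y]`-basis of `A`. They span: division by `f` writes
`p = g f + r` with `r` a combination of them and `g` of smaller leading exponent. They are
independent: a nonzero multiple of `f` has leading exponent `≥ α`, so their `k`-span `V` meets `fA`
only in `0`; since `f` is a nonzerodivisor, `∑ fⁱ vᵢ = 0` with `vᵢ ∈ V` forces `v₀ = 0` and then
recursively all `vᵢ = 0`.
-/

open MvPolynomial

section PolynomialModule

open Polynomial

variable {R M ι : Type*} [CommRing R] [AddCommGroup M] [Module R[X] M] [Module R M]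
  [IsScalarTower R R[X] M] {b : ι → M}

theorem Polynomial.linearIndependent_of_X_smul_mem_span_eq_zero (hb : LinearIndependent R b)
    (hX : Function.Injective ((X : R[X]) • · : M → M))
    (hdisj : ∀ x : M, (X : R[X]) • x ∈ Submodule.span R (Set.range b) → (X : R[X]) • x = 0) :
    LinearIndependent R[X] b := by
  rw [linearIndependent_iff']
  intro s g hg i hi
  have hpeel : ∀ c : ι → R[X], ∑ i ∈ s, c i • b i = 0 →
      (∀ i ∈ s, (c i).coeff 0 = 0) ∧ ∑ i ∈ s, (c i).divX • b i = 0 := by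
    intro c hc
    set x := ∑ i ∈ s, (c i).divX • b i
    have hsplit : ∑ i ∈ s, c i • b i = ∑ i ∈ s, (c i).coeff 0 • b i + (X : R[X]) • x := by
      simp only [x, Finset.smul_sum, ← Finset.sum_add_distrib, smul_smul]
      refine Finset.sum_congr rfl fun i _ => ?_
      conv_lhs => rw [← X_mul_divX_add (c i)]
      rw [add_smul, add_comm, ← Polynomial.algebraMap_eq, algebraMap_smul]
    have hconst : ∑ i ∈ s, (c i).coeff 0 • b i = (X : R[X]) • -x := by
      rw [smul_neg, eq_neg_iff_add_eq_zero, ← hsplit, hc]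
    have hmem : (X : R[X]) • -x ∈ Submodule.span R (Set.range b) :=
      hconst ▸ Submodule.sum_mem _ fun i _ =>
        Submodule.smul_mem _ _ (Submodule.subset_span (Set.mem_range_self i))
    refine ⟨linearIndependent_iff'.mp hb s _ (hconst.trans (hdisj _ hmem)), ?_⟩
    exact neg_eq_zero.mp (hX (by simpa using hdisj _ hmem))
  suffices ∀ n (g : ι → R[X]), ∑ i ∈ s, g i • b i = 0 → ∀ i ∈ s, (g i).coeff n = 0 from
    Polynomial.ext fun n => this n g hg i hi
  intro n
  induction n with
  | zero => exact fun g hg => (hpeel g hg).1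
  | succ n ih =>
    intro g hg i hi
    rw [← coeff_divX]
    exact ih (fun i => (g i).divX) (hpeel g hg).2 i hi

end PolynomialModule

namespace MonomialOrder

variable {σ R : Type*} [CommRing R] (m : MonomialOrder σ) {f : MvPolynomial σ R}

theorem mul_eq_zero_of_mem_restrictSupport (hf : IsRegular (m.leadingCoeff f))
    {g : MvPolynomial σ R} (h : f * g ∈ restrictSupport R {c | ¬ m.degree f ≤ c}) :
    f * g = 0 := by
  by_contra hfg
  have hg : g ≠ 0 := by rintro rfl; exact hfg (mul_zero f)
  have hmem := (mem_restrictSupport_iff R).mp h (m.degree_mem_support hfg)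
  rw [m.degree_mul_of_isRegular_left hf hg] at hmem
  exact hmem le_self_add

theorem eq_top_of_restrictSupport_le (hf : IsUnit (m.leadingCoeff f)) (hdeg : m.degree f ≠ 0)
    {N : Submodule R (MvPolynomial σ R)} (hS : restrictSupport R {c | ¬ m.degree f ≤ c} ≤ N)
    (hmul : ∀ p ∈ N, f * p ∈ N) : N = ⊤ := by
  refine eq_top_iff.mpr fun p _ => ?_
  induction h : m.toSyn (m.degree p) using WellFoundedLT.induction generalizing p with
  | ind d ih =>
    obtain ⟨g, r, rfl, hle, hr⟩ := m.div_single hf p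
    refine N.add_mem ?_ (hS fun c hc => hr c hc)
    rcases eq_or_ne g 0 with rfl | hg
    · rw [zero_mul]
      exact N.zero_mem
    rw [mul_comm]
    refine hmul g (ih _ ?_ g trivial rfl)
    rw [← h]
    refine lt_of_lt_of_le ?_ hle
    rw [m.degree_mul_of_isRegular_left hf.isRegular hg, map_add]
    exact lt_add_of_pos_left _ ((m.toSyn.injective.ne_iff' m.toSyn.map_zero).mpr hdeg).bot_lt

end MonomialOrder

section FreeOverPolynomial

open Polynomial

variable {σ K : Type*} [Field K] [Module K[X] (MvPolynomial σ K)]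
  [IsScalarTower K K[X] (MvPolynomial σ K)]

theorem MonomialOrder.free_polynomial_of_X_smul_eq_mul (m : MonomialOrder σ)
    {f : MvPolynomial σ K} (hdeg : m.degree f ≠ 0)
    (X_smul : ∀ p : MvPolynomial σ K, (X : K[X]) • p = f * p) :
    Module.Free K[X] (MvPolynomial σ K) := by
  have hlc : m.leadingCoeff f ≠ 0 := by
    rw [Ne, m.leadingCoeff_eq_zero_iff]
    rintro rfl
    exact hdeg m.degree_zero
  set S := {c | ¬ m.degree f ≤ c}
  let b : S → MvPolynomial σ K := fun c => monomial c 1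
  have hspan_b : Submodule.span K (Set.range b) = restrictSupport K S := by
    rw [restrictSupport_eq_span, Set.image_eq_range]
  have hli : LinearIndependent K[X] b := by
    refine linearIndependent_of_X_smul_mem_span_eq_zero
      ((basisMonomials σ K).linearIndependent.comp _ Subtype.val_injective) ?_ fun p hp => ?_
    · intro p q hpq
      simpa [X_smul, m.leadingCoeff_eq_zero_iff.not.mp hlc] using hpq
    · rw [hspan_b, X_smul] at hp
      rw [X_smul]
      exact m.mul_eq_zero_of_mem_restrictSupport (.of_ne_zero hlc) hp
  have hspan : ⊤ ≤ Submodule.span K[X] (Set.range b) := by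
    refine (m.eq_top_of_restrictSupport_le hlc.isUnit hdeg
      (N := (Submodule.span K[X] (Set.range b)).restrictScalars K) ?_ fun p hp => ?_).ge
    · exact hspan_b ▸ Submodule.span_le_restrictScalars K K[X] _
    · exact X_smul p ▸ (Submodule.span K[X] (Set.range b)).smul_mem X hp
  exact Module.Free.of_basis (Module.Basis.mk hli hspan)

end FreeOverPolynomial

theorem unfolding_stmt3_general (k : Type*) [Field k] (n : ℕ)
    (f : MvPolynomial (Fin n) k) (hf : ∀ c : k, f ≠ C c) :
    letI : Module (Polynomial k) (MvPolynomial (Fin n) k) :=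
      Module.compHom _ (Polynomial.aeval f).toRingHom
    Module.Free (Polynomial k) (MvPolynomial (Fin n) k) := by
  let _ : Module (Polynomial k) (MvPolynomial (Fin n) k) :=
    Module.compHom _ (Polynomial.aeval f).toRingHom
  have _ : IsScalarTower k (Polynomial k) (MvPolynomial (Fin n) k) :=
    ⟨fun a q p => (congrArg (· * p) (map_smul (Polynomial.aeval f) a q)).trans (smul_mul_assoc ..)⟩
  exact MonomialOrder.lex.free_polynomial_of_X_smul_eq_mul
    (fun h => hf _ (MonomialOrder.lex.degree_eq_zero_iff.mp h))
    fun p => congrArg (· * p) (Polynomial.aeval_X f)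

/-- Let `k` be a field of characteristic zero and `f ∈ A = k[x₁,…,xₙ]`
a nonconstant polynomial.  Then `A` is a free module over `B = k[y]`, where the `B`-module
structure is induced by the `k`-algebra homomorphism `B → A` sending `y ↦ f`. -/
theorem unfolding_stmt3 (k : Type*) [Field k] [CharZero k] (n : ℕ)
    (f : MvPolynomial (Fin n) k) (hf : ∀ c : k, f ≠ C c) :
    letI : Module (Polynomial k) (MvPolynomial (Fin n) k) :=
      Module.compHom _ (Polynomial.aeval f).toRingHom
    Module.Free (Polynomial k) (MvPolynomial (Fin n) k) :=
  unfolding_stmt3_general k n f hf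
end

section
/- Let A be a commutative ring and a_1,…,a_n ∈ A a regular sequence generating a proper ideal. Then the Koszul complex K(a_1,…,a_n) is acyclic in positive homological degrees, i.e., its homology vanishes except in degree 0 where it equals A/(a_1,…,a_n). -/
/-!
Identify `Aⁿ⁺¹` with `A × Aⁿ`, the first factor carrying the last coordinate, and let `ε = (1, 0)`
and `J = ⋀(inr)`. Every element of `⋀(A × M)` is uniquely `J u + ε ∧ J v`, and contraction with
`(c, φ)` sends it to `J (d u + c v) - ε ∧ J (d v)`: the Koszul complex of `(c, φ)` is the mapping
cone of multiplication by `c` on the Koszul complex of `φ`. For a cycle `(u, v)` of positive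
degree, `d v = 0` and `c v = d (-u)`, so `v = d y₁`: by acyclicity of `φ` in positive degree, and
in degree zero because `c` is a nonzerodivisor modulo `range φ = (a₁, …, aₙ)`. Then `u + c y₁` is
a cycle, hence `d y₀`, and `(y₀, -y₁)` maps to `(u, v)`. Induction on `n` peels the last element
off the regular sequence. In degree zero the boundaries `d (⋀¹)` are exactly `range φ`.
-/

open ExteriorAlgebra
open CliffordAlgebra (contractLeft contractLeft_ι contractLeft_ι_mul contractLeft_algebraMap)

namespace ExteriorAlgebra

variable {A M N : Type*} [CommRing A] [AddCommGroup M] [Module A M] [AddCommGroup N] [Module A N]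

theorem ι_mul_mem_exteriorPower_succ (m : M) {i : ℕ} {x : ExteriorAlgebra A M}
    (hx : x ∈ ⋀[A]^i M) : ι A m * x ∈ ⋀[A]^(i + 1) M := by
  rw [exteriorPower, pow_succ']
  exact Submodule.mul_mem_mul (LinearMap.mem_range_self _ m) hx

theorem mem_exteriorPower_zero {x : ExteriorAlgebra A M} :
    x ∈ ⋀[A]^0 M ↔ ∃ r : A, algebraMap A _ r = x := by
  rw [exteriorPower, pow_zero, Submodule.mem_one]

theorem eq_zero_of_mem_exteriorPower_succ [Subsingleton M] {p : ℕ} {x : ExteriorAlgebra A M}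
    (hx : x ∈ ⋀[A]^(p + 1) M) : x = 0 := by
  have hι : LinearMap.range (ι A : M →ₗ[A] ExteriorAlgebra A M) = ⊥ := by
    rw [LinearMap.range_eq_bot, Subsingleton.elim (ι A) 0]
  rwa [exteriorPower, hι, pow_succ, Submodule.mul_bot, Submodule.mem_bot] at hx

theorem map_mem_exteriorPower (f : M →ₗ[A] N) {p : ℕ} {x : ExteriorAlgebra A M}
    (hx : x ∈ ⋀[A]^p M) : map f x ∈ ⋀[A]^p N := by
  have hι : (LinearMap.range (ι A : M →ₗ[A] _)).map (map f).toLinearMap ≤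
      LinearMap.range (ι A : N →ₗ[A] _) := by
    rw [ι_range_map_map]
    exact LinearMap.map_le_range
  have := pow_le_pow_left' hι p
  rw [← Submodule.map_pow] at this
  exact this (Submodule.mem_map_of_mem hx)

theorem contractLeft_map (f : M →ₗ[A] N) (φ : Module.Dual A N) (x : ExteriorAlgebra A M) :
    contractLeft φ (map f x) = map f (contractLeft (φ ∘ₗ f) x) := by
  induction x using CliffordAlgebra.left_induction with
  | algebraMap r => simp only [AlgHom.commutes, contractLeft_algebraMap, map_zero]
  | add x y hx hy => simp only [map_add, hx, hy]
  | ι_mul m x hx =>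
    rw [map_mul, map_apply_ι, contractLeft_ι_mul, contractLeft_ι_mul, hx, map_sub, map_smul,
      map_mul, map_apply_ι]
    rfl

theorem contractLeft_eq_zero_of_mem_exteriorPower_zero (φ : Module.Dual A M)
    {x : ExteriorAlgebra A M} (hx : x ∈ ⋀[A]^0 M) : contractLeft φ x = 0 := by
  obtain ⟨r, rfl⟩ := mem_exteriorPower_zero.mp hx
  exact contractLeft_algebraMap _ φ r

theorem contractLeft_mem_exteriorPower (φ : Module.Dual A M) {p : ℕ} {x : ExteriorAlgebra A M}
    (hx : x ∈ ⋀[A]^(p + 1) M) : contractLeft φ x ∈ ⋀[A]^p M := by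
  -- `i - 1` truncates at `i = 0`, where the contraction vanishes anyway.
  suffices ∀ i, ∀ x ∈ ⋀[A]^i M, contractLeft φ x ∈ ⋀[A]^(i - 1) M from this _ x hx
  intro i x hx
  induction hx using Submodule.pow_induction_on_left' with
  | algebraMap r => simp only [contractLeft_algebraMap, zero_mem]
  | add x y i _ _ hx hy => rw [map_add]; exact add_mem hx hy
  | mem_mul m hm i x hx ih =>
    obtain ⟨v, rfl⟩ := hm
    rw [contractLeft_ι_mul]
    refine sub_mem (Submodule.smul_mem _ _ hx) ?_
    cases i with
    | zero => simp [contractLeft_eq_zero_of_mem_exteriorPower_zero φ hx]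
    | succ i => exact ι_mul_mem_exteriorPower_succ v ih

theorem exists_contractLeft_eq_algebraMap_iff (φ : Module.Dual A M) (r : A) :
    (∃ y ∈ ⋀[A]^1 M, contractLeft φ y = algebraMap A _ r) ↔ r ∈ LinearMap.range φ := by
  rw [exteriorPower, pow_one]
  constructor
  · rintro ⟨_, ⟨m, rfl⟩, hm⟩
    rw [contractLeft_ι] at hm
    exact ⟨m, (algebraMap_leftInverse M).injective hm⟩
  · rintro ⟨m, rfl⟩
    exact ⟨ι A m, LinearMap.mem_range_self _ m, contractLeft_ι _ φ m⟩

end ExteriorAlgebra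

section Koszul

variable {A M N : Type*} [CommRing A] [AddCommGroup M] [Module A M] [AddCommGroup N] [Module A N]

def IsKoszulAcyclic (φ : Module.Dual A M) : Prop :=
  ∀ p : ℕ, 0 < p → ∀ x ∈ ⋀[A]^p M, contractLeft φ x = 0 →
    ∃ y ∈ ⋀[A]^(p + 1) M, contractLeft φ y = x

theorem IsKoszulAcyclic.of_subsingleton [Subsingleton M] (φ : Module.Dual A M) :
    IsKoszulAcyclic φ := by
  rintro (_ | p) hp x hx -
  · exact absurd hp (lt_irrefl 0)
  · exact ⟨0, zero_mem _, by rw [map_zero, eq_zero_of_mem_exteriorPower_succ hx]⟩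

theorem IsKoszulAcyclic.of_comp_linearEquiv {φ : Module.Dual A N} (e : M ≃ₗ[A] N)
    (h : IsKoszulAcyclic (φ ∘ₗ e.toLinearMap)) : IsKoszulAcyclic φ := by
  intro p hp x hx hdx
  have hx' : map e.toLinearMap (map e.symm.toLinearMap x) = x :=
    leftInverse_map_iff.mpr e.apply_symm_apply x
  rw [← hx', contractLeft_map] at hdx
  obtain ⟨y, hy, hdy⟩ := h p hp _ (map_mem_exteriorPower _ hx)
    ((map_eq_zero_iff _ (map_injective ⟨e.symm.toLinearMap, by ext; simp⟩)).mp hdx)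
  exact ⟨map e.toLinearMap y, map_mem_exteriorPower _ hy, by rw [contractLeft_map, hdy, hx']⟩

theorem IsKoszulAcyclic.exists_contractLeft_eq_of_smul {φ : Module.Dual A M}
    (hφ : IsKoszulAcyclic φ) {c : A} (hc : IsSMulRegular (A ⧸ LinearMap.range φ) c) {q : ℕ}
    {x : ExteriorAlgebra A M} (hx : x ∈ ⋀[A]^q M) (hdx : contractLeft φ x = 0)
    (hcx : ∃ y ∈ ⋀[A]^(q + 1) M, contractLeft φ y = c • x) :
    ∃ y ∈ ⋀[A]^(q + 1) M, contractLeft φ y = x := by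
  rcases q with _ | q
  · obtain ⟨r, rfl⟩ := mem_exteriorPower_zero.mp hx
    rw [Algebra.smul_def, ← map_mul, exists_contractLeft_eq_algebraMap_iff] at hcx
    rw [exists_contractLeft_eq_algebraMap_iff, ← Submodule.Quotient.mk_eq_zero]
    refine hc.right_eq_zero_of_smul ?_
    rwa [← Submodule.Quotient.mk_smul, Submodule.Quotient.mk_eq_zero]
  · exact hφ _ q.succ_pos x hx hdx

end Koszul

section MappingCone

open LinearMap (inr fst snd)

variable {A M : Type*} [CommRing A] [AddCommGroup M] [Module A M]

local notation "J" => ExteriorAlgebra.map (inr A A M)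
local notation "ε" => ExteriorAlgebra.ι A ((1, 0) : A × M)

namespace ExteriorAlgebra

theorem map_snd_map_inr (t : ExteriorAlgebra A M) : map (snd A A M) (J t) = t :=
  leftInverse_map_iff.mpr (fun _ => rfl) t

theorem contractLeft_fst_map_inr (t : ExteriorAlgebra A M) :
    contractLeft (fst A A M) (J t) = 0 := by
  rw [contractLeft_map, LinearMap.fst_comp_inr, map_zero, LinearMap.zero_apply, map_zero]

theorem eq_map_inr_add_ι_mul (z : ExteriorAlgebra A (A × M)) :
    z = J (map (snd A A M) z) + ε * J (map (snd A A M) (contractLeft (fst A A M) z)) := by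
  induction z using CliffordAlgebra.left_induction with
  | algebraMap r =>
    simp only [AlgHom.commutes, contractLeft_algebraMap, map_zero, mul_zero, add_zero]
  | add x y hx hy =>
    simp only [map_add, mul_add]
    conv_lhs => rw [hx, hy]
    abel
  | ι_mul x v hx =>
    have hv : ι A v = ι A (inr A A M v.2) + v.1 • ε := by
      rw [← map_smul, ← map_add]
      simp
    have hε : ε * ε = 0 := ι_sq_zero _
    have hanti : ι A (inr A A M v.2) * ε = -(ε * ι A (inr A A M v.2)) :=
      eq_neg_of_add_eq_zero_left (ι_add_mul_swap _ _)
    simp only [map_mul, map_apply_ι, contractLeft_ι_mul, map_sub, map_smul, LinearMap.snd_apply,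
      LinearMap.fst_apply]
    set X₀ := J (map (snd A A M) x)
    set X₁ := J (map (snd A A M) (contractLeft (fst A A M) x))
    rw [hx, hv]
    simp only [add_mul, mul_add, smul_mul_assoc, mul_smul_comm, mul_sub, ← mul_assoc, hε, hanti,
      smul_zero, neg_mul, add_zero]
    abel

theorem eq_zero_of_map_inr_add_ι_mul_eq_zero {u v : ExteriorAlgebra A M}
    (h : J u + ε * J v = 0) : u = 0 ∧ v = 0 := by
  have hu : u = 0 := by
    simpa [map_snd_map_inr] using congrArg (map (snd A A M)) h
  refine ⟨hu, ?_⟩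
  have hv := congrArg (contractLeft (fst A A M)) h
  rw [hu, map_zero, zero_add, contractLeft_ι_mul, contractLeft_fst_map_inr, mul_zero, sub_zero,
    LinearMap.fst_apply, one_smul, map_zero] at hv
  simpa [map_snd_map_inr] using congrArg (map (snd A A M)) hv

theorem contractLeft_coprod_map_inr_add_ι_mul (φ : Module.Dual A M) (c : A)
    (u v : ExteriorAlgebra A M) :
    contractLeft ((c • LinearMap.id).coprod φ) (J u + ε * J v) =
      J (contractLeft φ u + c • v) + ε * J (-contractLeft φ v) := by
  simp only [map_add, contractLeft_ι_mul, contractLeft_map, LinearMap.coprod_inr, map_smul,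
    map_neg, mul_neg, LinearMap.coprod_apply, LinearMap.smul_apply, LinearMap.id_apply,
    smul_eq_mul, mul_one, map_zero, add_zero]
  abel

end ExteriorAlgebra

theorem IsKoszulAcyclic.coprod {φ : Module.Dual A M} (hφ : IsKoszulAcyclic φ) {c : A}
    (hc : IsSMulRegular (A ⧸ LinearMap.range φ) c) :
    IsKoszulAcyclic ((c • LinearMap.id).coprod φ) := by
  rintro (_ | q) hp z hz hdz
  · exact absurd hp (lt_irrefl 0)
  set x₀ := map (snd A A M) z
  set x₁ := map (snd A A M) (contractLeft (fst A A M) z)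
  have hz_eq : z = J x₀ + ε * J x₁ := eq_map_inr_add_ι_mul z
  have hx₀ : x₀ ∈ ⋀[A]^(q + 1) M := map_mem_exteriorPower _ hz
  have hx₁ : x₁ ∈ ⋀[A]^q M := map_mem_exteriorPower _ (contractLeft_mem_exteriorPower _ hz)
  rw [hz_eq, contractLeft_coprod_map_inr_add_ι_mul] at hdz
  obtain ⟨hcycle₀, hcycle₁⟩ := eq_zero_of_map_inr_add_ι_mul_eq_zero hdz
  obtain ⟨y₁, hy₁, hdy₁⟩ := hφ.exists_contractLeft_eq_of_smul hc hx₁ (neg_eq_zero.mp hcycle₁)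
    ⟨-x₀, neg_mem hx₀, by rw [map_neg, neg_eq_iff_add_eq_zero, hcycle₀]⟩
  obtain ⟨y₀, hy₀, hdy₀⟩ := hφ (q + 1) hp (x₀ + c • y₁)
    (add_mem hx₀ (Submodule.smul_mem _ c hy₁)) (by rw [map_add, map_smul, hdy₁, hcycle₀])
  refine ⟨J y₀ + ε * J (-y₁), add_mem (map_mem_exteriorPower _ hy₀)
    (ι_mul_mem_exteriorPower_succ _ (map_mem_exteriorPower _ (neg_mem hy₁))), ?_⟩
  rw [contractLeft_coprod_map_inr_add_ι_mul, hdy₀, map_neg (contractLeft φ), hdy₁, neg_neg,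
    smul_neg, add_neg_cancel_right, hz_eq]

end MappingCone

def Fin.snocLinearEquiv (R M : Type*) [Semiring R] [AddCommMonoid M] [Module R M] (n : ℕ) :
    (M × (Fin n → M)) ≃ₗ[R] (Fin (n + 1) → M) where
  __ := Fin.snocEquiv fun _ => M
  map_add' x y := funext <| Fin.lastCases (by simp) (by simp)
  map_smul' c x := funext <| Fin.lastCases (by simp) (by simp)

section Sequence

open RingTheory.Sequence

variable {R : Type*} [CommRing R]

theorem RingTheory.Sequence.isWeaklyRegular_concat_iff (M : Type*) [AddCommGroup M] [Module R M]
    (rs : List R) (r : R) :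
    IsWeaklyRegular M (rs.concat r) ↔
      IsWeaklyRegular M rs ∧ IsSMulRegular (M ⧸ (Ideal.ofList rs • ⊤ : Submodule R M)) r := by
  rw [List.concat_eq_append, isWeaklyRegular_append_iff, isWeaklyRegular_singleton_iff]

theorem Ideal.ofList_ofFn {n : ℕ} (a : Fin n → R) :
    Ideal.ofList (List.ofFn a) = Ideal.span (Set.range a) := by
  simp only [Ideal.ofList, List.mem_ofFn', Set.ofPred_mem_eq]

theorem sum_smul_proj_eq_linearCombination {ι : Type*} [Fintype ι] (a : ι → R) :
    ∑ i, a i • LinearMap.proj i = Fintype.linearCombination R a := by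
  ext v
  simp [Fintype.linearCombination_apply, mul_comm]

theorem linearCombination_comp_snocLinearEquiv {n : ℕ} (a : Fin (n + 1) → R) :
    Fintype.linearCombination R a ∘ₗ (Fin.snocLinearEquiv R R n).toLinearMap =
      (a (Fin.last n) • LinearMap.id).coprod (Fintype.linearCombination R (Fin.init a)) := by
  refine LinearMap.ext fun ⟨t, v⟩ => ?_
  simp [Fintype.linearCombination_apply, Fin.sum_univ_castSucc, Fin.snocLinearEquiv, Fin.init,
    mul_comm, add_comm]

theorem isKoszulAcyclic_linearCombination {n : ℕ} (a : Fin n → R)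
    (h : IsWeaklyRegular R (List.ofFn a)) : IsKoszulAcyclic (Fintype.linearCombination R a) := by
  induction n with
  | zero => exact .of_subsingleton _
  | succ n ih =>
    rw [List.ofFn_succ', isWeaklyRegular_concat_iff, Ideal.smul_eq_mul, Ideal.mul_top,
      Ideal.ofList_ofFn] at h
    obtain ⟨hinit, hlast⟩ := h
    refine .of_comp_linearEquiv (Fin.snocLinearEquiv R R n) ?_
    rw [linearCombination_comp_snocLinearEquiv]
    exact (ih _ hinit).coprod (by rwa [Fintype.range_linearCombination])

end Sequence

/-- Let `A` be a commutative ring and `a₁, …, aₙ ∈ A` a regular sequence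
generating a proper ideal.  The Koszul complex `K(a₁,…,aₙ)` is the exterior algebra on `Aⁿ`
with the differential `d` given by contraction with the dual vector `φ = ∑ aᵢ·eᵢ*`
(so `d(eᵢ) = aᵢ`).  Then the complex is acyclic in positive homological degrees: every
`d`-cycle lying in `⋀^p Aⁿ` with `p > 0` is a boundary of an element of `⋀^(p+1) Aⁿ`;
moreover in degree `0` the homology is `A/(a₁,…,aₙ)`: an element of `A = ⋀^0` is a boundary
iff it lies in the ideal `(a₁,…,aₙ)`. -/
theorem unfolding_stmt5 (A : Type*) [CommRing A] (n : ℕ) (a : Fin n → A)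
    (hreg : RingTheory.Sequence.IsRegular A (List.ofFn a)) :
    let φ : Module.Dual A (Fin n → A) := ∑ i : Fin n, a i • LinearMap.proj i
    let d : ExteriorAlgebra A (Fin n → A) →ₗ[A] ExteriorAlgebra A (Fin n → A) :=
      CliffordAlgebra.contractLeft φ
    (∀ p : ℕ, 0 < p → ∀ x ∈ ⋀[A]^p (Fin n → A), d x = 0 →
        ∃ y ∈ ⋀[A]^(p + 1) (Fin n → A), d y = x) ∧
    (∀ x : A,
      (∃ y ∈ ⋀[A]^1 (Fin n → A), d y = algebraMap A (ExteriorAlgebra A (Fin n → A)) x) ↔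
        x ∈ Ideal.span (Set.range a)) := by
  intro φ d
  have hφ : φ = Fintype.linearCombination A a := sum_smul_proj_eq_linearCombination a
  refine ⟨?_, fun x => ?_⟩
  · change IsKoszulAcyclic φ
    rw [hφ]
    exact isKoszulAcyclic_linearCombination a hreg.toIsWeaklyRegular
  · rw [exists_contractLeft_eq_algebraMap_iff, hφ, Fintype.range_linearCombination]
end

section
/- Let k be a field of characteristic zero, A = k[x,y,z] with the Schouten–Nijenhuis bracket on polyvector fields S_A(T_A[-1]) where T_A = Der_k(A). If f ∈ A and T is a 3-vector field with S = [f, T], then [S, S] = 0; equivalently, any bivector field of the form [f,T] is a Poisson bivector. -/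
open MvPolynomial

/- Polyvector fields on affine `n`-space in coordinates.  Since `T_A = Der_k(A)` is free on
`∂₁, …, ∂ₙ`, a `p`-vector field is given by its alternating array of coefficients.  The
Schouten–Nijenhuis bracket is given by the classical coordinate formulas below. -/

variable {k : Type*} [CommRing k] {n : ℕ}

/-- The coefficients of the Schouten bracket `[g, S]` (contraction of the bivector `S` with
`dg`): `[g,S]_j = ∑ᵢ S i j ∂ᵢ g`.  It is a vector field. -/
noncomputable def schFnBiv (g : MvPolynomial (Fin n) k)
    (S : Fin n → Fin n → MvPolynomial (Fin n) k) : Fin n → MvPolynomial (Fin n) k :=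
  fun j => ∑ i, S i j * pderiv i g

/-- The coefficients of the Schouten bracket `[g, T]` of a function with a trivector `T`
(contraction with `dg`): it is a bivector, `[g,T]_{jk} = ∑ᵢ T i j k ∂ᵢ g`. -/
noncomputable def schFnTriv (g : MvPolynomial (Fin n) k)
    (T : Fin n → Fin n → Fin n → MvPolynomial (Fin n) k) :
    Fin n → Fin n → MvPolynomial (Fin n) k :=
  fun j l => ∑ i, T i j l * pderiv i g

/-- The coefficients of the Schouten bracket `[S, S]` of a bivector with itself; it is a
trivector with components `[S,S]^{ijk} = 2 ∑ₗ (S l i ∂ₗ S j k + S l j ∂ₗ S k i + S l k ∂ₗ S i j)`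
(we drop the overall factor 2, harmless in characteristic zero). -/
noncomputable def schBivBiv (S : Fin n → Fin n → MvPolynomial (Fin n) k) :
    Fin n → Fin n → Fin n → MvPolynomial (Fin n) k :=
  fun i j l => ∑ m, (S m i * pderiv m (S j l) + S m j * pderiv m (S l i) +
    S m l * pderiv m (S i j))

/-- A trivector array is alternating. -/
def IsAltTriv (T : Fin n → Fin n → Fin n → MvPolynomial (Fin n) k) : Prop :=
  ∀ i j l, T i j l = - T j i l ∧ T i j l = - T i l j

/-- Partial derivatives of multivariate polynomials commute. -/
lemma pderiv_comm' {R σ : Type*} [CommSemiring R] (i j : σ) (p : MvPolynomial σ R) :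
    pderiv i (pderiv j p) = pderiv j (pderiv i p) := by
  classical
  induction p using MvPolynomial.induction_on with
  | C a => simp
  | add p q hp hq => simp [hp, hq]
  | mul_X p m h =>
    have hx : ∀ (a b : σ), pderiv a (X b : MvPolynomial σ R) = C (if b = a then 1 else 0) := by
      intro a b
      by_cases hab : b = a <;> simp [hab, pderiv_X_self, pderiv_X_of_ne]
    simp only [map_mul, Derivation.leibniz, smul_eq_mul, map_add, hx, pderiv_C_mul, pderiv_C,
      mul_zero, add_zero, h]
    ring

/-- The Jacobian-type bivector `S = t · (df ⨼ ∂₀∧∂₁∧∂₂)` satisfies `[S,S] = 0`. -/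
lemma schBivBiv_jacobian_eq_zero {k : Type*} [CommRing k] (t f : MvPolynomial (Fin 3) k)
    (S : Fin 3 → Fin 3 → MvPolynomial (Fin 3) k)
    (s00 : S 0 0 = 0) (s11 : S 1 1 = 0) (s22 : S 2 2 = 0)
    (s01 : S 0 1 = t * pderiv 2 f) (s10 : S 1 0 = -(t * pderiv 2 f))
    (s12 : S 1 2 = t * pderiv 0 f) (s21 : S 2 1 = -(t * pderiv 0 f))
    (s02 : S 0 2 = -(t * pderiv 1 f)) (s20 : S 2 0 = t * pderiv 1 f) :
    ∀ i j l, schBivBiv S i j l = 0 := by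
  have c01 : pderiv 1 (pderiv 0 f) = pderiv 0 (pderiv 1 f) := pderiv_comm' _ _ _
  have c02 : pderiv 2 (pderiv 0 f) = pderiv 0 (pderiv 2 f) := pderiv_comm' _ _ _
  have c12 : pderiv 2 (pderiv 1 f) = pderiv 1 (pderiv 2 f) := pderiv_comm' _ _ _
  have f2 : (⟨2, by omega⟩ : Fin 3) = (2 : Fin 3) := rfl
  have f1 : (⟨1, by omega⟩ : Fin 3) = (1 : Fin 3) := rfl
  have f0 : (⟨0, by omega⟩ : Fin 3) = (0 : Fin 3) := rfl
  intro i j l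
  fin_cases i <;> fin_cases j <;> fin_cases l <;>
  · simp only [schBivBiv, Fin.sum_univ_three, f0, f1, f2, Fin.isValue, s00, s11, s22, s01, s10,
      s12, s21, s02, s20, map_zero, map_neg, Derivation.leibniz, smul_eq_mul, mul_zero, zero_mul,
      mul_neg, neg_mul, add_zero, zero_add, neg_neg, c01, c02, c12]
    try ring

/-- Let `k` be a field of characteristic zero and `A = k[x,y,z]` with the
Schouten–Nijenhuis bracket on polyvector fields.  If `f ∈ A` and `T` is a 3-vector field,
then the bivector `S = [f, T]` satisfies `[S, S] = 0`, i.e. is a Poisson bivector. -/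
theorem unfolding_stmt6 (k : Type*) [Field k] [CharZero k]
    (f : MvPolynomial (Fin 3) k)
    (T : Fin 3 → Fin 3 → Fin 3 → MvPolynomial (Fin 3) k) (hT : IsAltTriv T) :
    ∀ i j l, schBivBiv (schFnTriv f T) i j l = 0 := by
  have hhalf : ∀ p : MvPolynomial (Fin 3) k, p = -p → p = 0 := by
    intro p hp
    have h2 : (2 : MvPolynomial (Fin 3) k) * p = 0 := by linear_combination hp
    rcases mul_eq_zero.mp h2 with h3 | h3
    · exact absurd h3 two_ne_zero
    · exact h3
  have h1 : ∀ i l, T i i l = 0 := fun i l => hhalf _ (hT i i l).1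
  have h2 : ∀ i j, T i j j = 0 := fun i j => hhalf _ (hT i j j).2
  have h3 : ∀ i j, T i j i = 0 := by
    intro i j
    rw [(hT i j i).2, h1, neg_zero]
  have e102 : T 1 0 2 = -T 0 1 2 := by rw [(hT 1 0 2).1]
  have e021 : T 0 2 1 = -T 0 1 2 := by rw [(hT 0 2 1).2]
  have e120 : T 1 2 0 = T 0 1 2 := by rw [(hT 1 2 0).2, e102, neg_neg]
  have e201 : T 2 0 1 = T 0 1 2 := by rw [(hT 2 0 1).1, e021, neg_neg]
  have e210 : T 2 1 0 = -T 0 1 2 := by rw [(hT 2 1 0).1, e120]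
  refine schBivBiv_jacobian_eq_zero (T 0 1 2) f _ ?_ ?_ ?_ ?_ ?_ ?_ ?_ ?_ ?_ <;>
    simp [schFnTriv, Fin.sum_univ_three, h1, h2, h3, e102, e021, e120, e201, e210]
end

section
/- Let k be a field of characteristic zero, A = k[x,y,z] with Schouten bracket on polyvector fields, and f ∈ A with finite Milnor number. Then every bivector field S ∈ Λ²_A T_A satisfying [f, S] = 0 is of the form S = [f, T] for some trivector field T, and in particular satisfies [S, S] = 0 (is Poisson). -/
open MvPolynomial

/- Polyvector fields on affine `n`-space in coordinates.  Since `T_A = Der_k(A)` is free on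
`∂₁, …, ∂ₙ`, a `p`-vector field is given by its alternating array of coefficients.  The
Schouten–Nijenhuis bracket is given by the classical coordinate formulas below. -/

variable {k : Type*} [CommRing k] {n : ℕ}

/-- A bivector array is antisymmetric. -/
def IsAltBiv (S : Fin n → Fin n → MvPolynomial (Fin n) k) : Prop :=
  ∀ i j, S i j = - S j i

/-! In three variables a bivector `S` is Hodge dual to a vector `s = bivDual S`, and `[f, S]` is
the cross product `s × ∇f`.  A finite Milnor number forces the partials of `f` to have no common
factor in the factorial ring `k[x,y,z]`, so the Koszul complex on them is exact in the middle:
`s × ∇f = 0` gives `s = t ∇f`, i.e. `S = [f, t ε]` with `ε` the Levi-Civita symbol.  Such an `S` is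
the Jacobian Poisson structure `{g, h} = t det(∇f, ∇g, ∇h)`, whose Jacobi identity comes down to
the symmetry of second partial derivatives. -/

namespace MvPolynomial

variable {σ R : Type*} [CommSemiring R]

theorem pderiv_comm (i j : σ) (p : MvPolynomial σ R) :
    pderiv i (pderiv j p) = pderiv j (pderiv i p) := by
  classical
  induction p using MvPolynomial.induction_on with
  | C a => simp
  | add p q hp hq => simp [hp, hq]
  | mul_X p s hp =>
    simp only [pderiv_mul, pderiv_X, Pi.single_apply, map_add, hp, apply_ite (pderiv _),
      pderiv_one, map_zero, ite_self]
    ring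

theorem vars_subset_of_dvd [NoZeroDivisors R] {p q : MvPolynomial σ R} (hq : q ≠ 0)
    (h : p ∣ q) : p.vars ⊆ q.vars := by
  obtain ⟨r, rfl⟩ := h
  intro i hi
  rw [mem_vars_iff_degreeOf_ne_zero] at hi ⊢
  rw [degreeOf_mul_eq (left_ne_zero_of_mul hq) (right_ne_zero_of_mul hq)]
  omega

theorem vars_aeval_X_subset (i : σ) (q : Polynomial R) :
    (Polynomial.aeval (X i : MvPolynomial σ R) q).vars ⊆ {i} := by
  have : Polynomial.aeval (X i : MvPolynomial σ R) q ∈ supported R {i} := by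
    rw [supported_eq_adjoin_X, Set.image_singleton]
    exact Polynomial.aeval_mem_adjoin_singleton R (X i)
  exact_mod_cast mem_supported.1 this

variable {K : Type*} [Field K]

/- Each `X i` is integral modulo `p`, so `p` divides a nonzero polynomial in `X i` alone;
with two distinct variables available this forces `p` to be a nonzero constant. -/
theorem isUnit_of_finite_quotient_span_singleton [Nontrivial σ] {p : MvPolynomial σ K}
    [Module.Finite K (MvPolynomial σ K ⧸ Ideal.span {p})] : IsUnit p := by
  have hvars : ∀ i, p ≠ 0 ∧ p.vars ⊆ {i} := by
    intro i
    obtain ⟨q, hq, hpq⟩ := IsIntegral.of_finite K (Ideal.Quotient.mk (Ideal.span {p}) (X i))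
    have hq₀ : Polynomial.aeval (X i : MvPolynomial σ K) q ≠ 0 :=
      fun h => transcendental_X K i ⟨q, hq.ne_zero, h⟩
    have hdvd : p ∣ Polynomial.aeval (X i : MvPolynomial σ K) q := by
      rwa [← Ideal.mem_span_singleton, ← Ideal.Quotient.eq_zero_iff_mem,
        ← Ideal.Quotient.mkₐ_eq_mk K, ← Polynomial.aeval_algHom_apply, Polynomial.aeval_def]
    exact ⟨ne_zero_of_dvd_ne_zero hq₀ hdvd,
      (vars_subset_of_dvd hq₀ hdvd).trans (vars_aeval_X_subset i q)⟩
  obtain ⟨i, j, hij⟩ := exists_pair_ne σ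
  have hp : p = C (p.coeff 0) := by
    rw [← vars_eq_empty_iff_eq_C, Finset.eq_empty_iff_forall_notMem]
    intro l hl
    exact hij ((Finset.mem_singleton.1 ((hvars i).2 hl)).symm.trans
      (Finset.mem_singleton.1 ((hvars j).2 hl)))
  rw [hp, isUnit_map_iff, isUnit_iff_ne_zero]
  intro h
  exact (hvars i).1 (by rw [hp, h, map_zero])

theorem isUnit_of_forall_dvd_of_finite_quotient [Nontrivial σ] {s : Set (MvPolynomial σ K)}
    [Module.Finite K (MvPolynomial σ K ⧸ Ideal.span s)] {d : MvPolynomial σ K}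
    (hd : ∀ g ∈ s, d ∣ g) : IsUnit d := by
  have hle : Ideal.span s ≤ Ideal.span {d} :=
    Ideal.span_le.2 fun g hg => Ideal.mem_span_singleton.2 (hd g hg)
  have := Module.Finite.of_surjective (Ideal.Quotient.factorₐ K hle).toLinearMap
    (Ideal.Quotient.factor_surjective hle)
  exact isUnit_of_finite_quotient_span_singleton

end MvPolynomial

open Matrix

section KoszulExactness

variable {R : Type*} [CommRing R] [IsDomain R] [UniqueFactorizationMonoid R]

theorem exists_eq_mul_of_mul_eq_mul {w₀ w₁ w₂ a b c : R} (hw₀ : w₀ ≠ 0)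
    (hw : ∀ d, d ∣ w₀ → d ∣ w₁ → d ∣ w₂ → IsUnit d)
    (h₁ : a * w₁ = b * w₀) (h₂ : a * w₂ = c * w₀) :
    ∃ t, a = t * w₀ ∧ b = t * w₁ ∧ c = t * w₂ := by
  obtain ⟨u₀, u₁, d, hu, rfl, rfl⟩ := UniqueFactorizationMonoid.exists_reduced_factors w₀ hw₀ w₁
  have hd : d ≠ 0 := left_ne_zero_of_mul hw₀
  have hu₀ : u₀ ≠ 0 := right_ne_zero_of_mul hw₀
  have h₁' : a * u₁ = b * u₀ := mul_left_cancel₀ hd (by linear_combination h₁)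
  obtain ⟨s, rfl⟩ : u₀ ∣ a := hu.dvd_of_dvd_mul_right ⟨b, by linear_combination h₁'⟩
  have hb : b = s * u₁ := mul_left_cancel₀ hu₀ (by linear_combination -h₁')
  have h₂' : s * w₂ = c * d := mul_left_cancel₀ hu₀ (by linear_combination h₂)
  have hdw₂ : IsRelPrime d w₂ := fun e hed hew₂ =>
    hw e (hed.mul_right u₀) (hed.mul_right u₁) hew₂
  obtain ⟨t, rfl⟩ : d ∣ s := hdw₂.dvd_of_dvd_mul_left ⟨c, by linear_combination h₂'⟩
  exact ⟨t, by ring, by rw [hb]; ring, mul_left_cancel₀ hd (by linear_combination -h₂')⟩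

theorem exists_eq_smul_of_cross_eq_zero {v w : Fin 3 → R}
    (hw : ∀ d, (∀ i, d ∣ w i) → IsUnit d) (h : v ⨯₃ w = 0) : ∃ t : R, v = t • w := by
  have h₀ := congrFun h 0
  have h₁ := congrFun h 1
  have h₂ := congrFun h 2
  simp only [cross_apply, cons_val, Pi.zero_apply, sub_eq_zero] at h₀ h₁ h₂
  have hw' : ∀ d, d ∣ w 0 → d ∣ w 1 → d ∣ w 2 → IsUnit d := fun d d₀ d₁ d₂ =>
    hw d fun i => by fin_cases i <;> assumption
  obtain ⟨i, hi⟩ : ∃ i, w i ≠ 0 := by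
    by_contra! hzero
    exact not_isUnit_zero (hw 0 fun i => by rw [hzero i])
  suffices ∃ t, v 0 = t * w 0 ∧ v 1 = t * w 1 ∧ v 2 = t * w 2 by
    obtain ⟨t, e₀, e₁, e₂⟩ := this
    exact ⟨t, funext fun i => by fin_cases i <;> assumption⟩
  fin_cases i
  · exact exists_eq_mul_of_mul_eq_mul hi hw' h₂ h₁.symm
  · obtain ⟨t, e₁, e₂, e₀⟩ :=
      exists_eq_mul_of_mul_eq_mul hi (fun d d₁ d₂ d₀ => hw' d d₀ d₁ d₂) h₀ h₂.symm
    exact ⟨t, e₀, e₁, e₂⟩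
  · obtain ⟨t, e₂, e₀, e₁⟩ :=
      exists_eq_mul_of_mul_eq_mul hi (fun d d₂ d₀ d₁ => hw' d d₀ d₁ d₂) h₁ h₀.symm
    exact ⟨t, e₀, e₁, e₂⟩

end KoszulExactness

/- For distinct indices `(j - i)(l - i)(l - j)/2` is the sign of the permutation `(i, j, l)`. -/
def leviCivita (i j l : Fin 3) : ℤ :=
  (((j : ℕ) : ℤ) - i) * (((l : ℕ) : ℤ) - i) * (((l : ℕ) : ℤ) - j) / 2

theorem leviCivita_swap (i j l : Fin 3) :
    leviCivita i j l = -leviCivita j i l ∧ leviCivita i j l = -leviCivita i l j := by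
  revert i j l; decide

theorem isAltTriv_leviCivita_mul (t : MvPolynomial (Fin 3) k) :
    IsAltTriv fun i j l => (leviCivita i j l : MvPolynomial (Fin 3) k) * t := by
  intro i j l
  obtain ⟨h₁, h₂⟩ := leviCivita_swap i j l
  dsimp only
  constructor
  · rw [h₁]; push_cast; ring
  · rw [h₂]; push_cast; ring

def bivDual (S : Fin 3 → Fin 3 → MvPolynomial (Fin 3) k) : Fin 3 → MvPolynomial (Fin 3) k :=
  ![S 1 2, S 2 0, S 0 1]

namespace IsAltBiv

variable [IsDomain k] [CharZero k] {S : Fin 3 → Fin 3 → MvPolynomial (Fin 3) k}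

theorem apply_self (hS : IsAltBiv S) (i : Fin 3) : S i i = 0 :=
  CharZero.eq_neg_self_iff.1 (hS i i)

theorem schFnBiv_eq_cross (hS : IsAltBiv S) (g : MvPolynomial (Fin 3) k) :
    schFnBiv g S = bivDual S ⨯₃ fun i => pderiv i g := by
  funext j
  fin_cases j <;>
    simp only [schFnBiv, bivDual, cross_apply, Fin.zero_eta, Fin.mk_one, Fin.reduceFinMk,
      Fin.isValue, Fin.sum_univ_three, hS.apply_self, hS 2 1, hS 0 2, hS 1 0, zero_mul, add_zero,
      zero_add, neg_mul, Nat.succ_eq_add_one, Nat.reduceAdd, cons_val_one, cons_val_zero,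
      cons_val] <;>
    ring

theorem eq_sum_leviCivita_mul_bivDual (hS : IsAltBiv S) (j l : Fin 3) :
    S j l = ∑ i, (leviCivita i j l : MvPolynomial (Fin 3) k) * bivDual S i := by
  simp only [Fin.sum_univ_three, bivDual, cons_val_zero, cons_val_one, cons_val_two, head_cons,
    tail_cons]
  fin_cases j <;> fin_cases l <;> simp only [Fin.zero_eta, Fin.mk_one, Fin.reduceFinMk] <;>
    norm_num [leviCivita, hS.apply_self, hS 2 1, hS 0 2, hS 1 0]

theorem schBivBiv_eq_zero (hS : IsAltBiv S) {g t : MvPolynomial (Fin 3) k}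
    (hSg : bivDual S = t • fun i => pderiv i g) (i j l : Fin 3) : schBivBiv S i j l = 0 := by
  have h₀ : S 1 2 = t * pderiv 0 g := congrFun hSg 0
  have h₁ : S 2 0 = t * pderiv 1 g := congrFun hSg 1
  have h₂ : S 0 1 = t * pderiv 2 g := congrFun hSg 2
  have h₁₀ := pderiv_comm (1 : Fin 3) 0 g
  have h₂₀ := pderiv_comm (2 : Fin 3) 0 g
  have h₂₁ := pderiv_comm (2 : Fin 3) 1 g
  fin_cases i <;> fin_cases j <;> fin_cases l <;>
    simp only [schBivBiv, Fin.sum_univ_three, Fin.zero_eta, Fin.mk_one, Fin.reduceFinMk,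
      hS.apply_self, hS 2 1, hS 0 2, hS 1 0, h₀, h₁, h₂] <;>
    simp only [pderiv_mul, map_neg, map_zero, h₁₀, h₂₀, h₂₁] <;>
    ring

end IsAltBiv

/-- Let `k` be a field of characteristic zero, `A = k[x,y,z]` with the
Schouten bracket on polyvector fields, and `f ∈ A` with finite Milnor number.  Then every
bivector field `S` with `[f, S] = 0` is of the form `S = [f, T]` for some trivector field
`T`, and in particular `[S, S] = 0`, i.e. `S` is Poisson. -/
theorem unfolding_stmt7 (k : Type*) [Field k] [CharZero k]
    (f : MvPolynomial (Fin 3) k)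
    (hμ : FiniteDimensional k
      (MvPolynomial (Fin 3) k ⧸
        Ideal.span (Set.range fun i : Fin 3 => pderiv i f)))
    (S : Fin 3 → Fin 3 → MvPolynomial (Fin 3) k) (hS : IsAltBiv S)
    (hfS : ∀ j, schFnBiv f S j = 0) :
    (∃ T : Fin 3 → Fin 3 → Fin 3 → MvPolynomial (Fin 3) k,
      IsAltTriv T ∧ ∀ j l, S j l = schFnTriv f T j l) ∧
    (∀ i j l, schBivBiv S i j l = 0) := by
  have hcross : bivDual S ⨯₃ (fun i => pderiv i f) = 0 := by
    rw [← hS.schFnBiv_eq_cross]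
    exact funext hfS
  have hcoprime : ∀ d, (∀ i, d ∣ pderiv i f) → IsUnit d := fun d hd =>
    isUnit_of_forall_dvd_of_finite_quotient (s := Set.range fun i : Fin 3 => pderiv i f)
      (by rintro _ ⟨i, rfl⟩; exact hd i)
  obtain ⟨t, ht⟩ := exists_eq_smul_of_cross_eq_zero hcoprime hcross
  refine ⟨⟨_, isAltTriv_leviCivita_mul t, fun j l => ?_⟩, hS.schBivBiv_eq_zero ht⟩
  simp only [hS.eq_sum_leviCivita_mul_bivDual j l, schFnTriv, ht, Pi.smul_apply, smul_eq_mul,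
    mul_assoc]
end

section
/- Let k be a field of characteristic zero, A = k[x_1,…,x_n], and f ∈ A with finite Milnor number. Then a solution of the Maurer–Cartan equation in 𝔪 ⊗ 𝔤¹ (governing noncommutative unfoldings of f over a local Artinian base (R,𝔪)) is given by any pair (p, T) with p ∈ 𝔪 ⊗ A and T ∈ 𝔪 ⊗ Λ³_A T_A satisfying [[f−p, T], [f−p, T]] = 0, via w = p∂_e + [f−p, T]. -/
open MvPolynomial

/- Polyvector fields on affine `n`-space in coordinates.  Since `T_A = Der_k(A)` is free on
`∂₁, …, ∂ₙ`, a `p`-vector field is given by its alternating array of coefficients.  The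
Schouten–Nijenhuis bracket is given by the classical coordinate formulas below. -/

variable {k : Type*} [CommRing k] {n : ℕ}

/-
`[g, [g, T]]_l = ∑ᵢ ∑ⱼ T i j l ∂ᵢg ∂ⱼg` pairs an array antisymmetric in `i, j` with a symmetric
one, so it vanishes as soon as `2` is not a zero divisor: this is `d² = 0` for the Koszul
differential `[f - p, ·]`.
-/

open Finset

theorem sum_sum_mul_mul_eq_zero_of_antisymm {ι S : Type*} [Fintype ι] [CommRing S]
    (h2 : IsLeftRegular (2 : S)) (A : ι → ι → S) (hA : ∀ i j, A i j = -A j i) (v : ι → S) :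
    ∑ i, ∑ j, A i j * v i * v j = 0 := by
  have hs : ∑ i, ∑ j, A i j * v i * v j = -∑ i, ∑ j, A i j * v i * v j := by
    calc ∑ i, ∑ j, A i j * v i * v j = ∑ i, ∑ j, A j i * v j * v i := sum_comm
      _ = -∑ i, ∑ j, A i j * v i * v j := by
        simp only [← sum_neg_distrib]
        refine sum_congr rfl fun i _ => sum_congr rfl fun j _ => ?_
        rw [hA j i]; ring
  refine h2 ?_
  simp only [mul_zero]
  linear_combination hs

theorem schFnBiv_schFnTriv_self (h2 : IsUnit (2 : k))
    (g : MvPolynomial (Fin n) k) (T : Fin n → Fin n → Fin n → MvPolynomial (Fin n) k)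
    (hT : ∀ i j l, T i j l = -T j i l) (l : Fin n) :
    schFnBiv g (schFnTriv g T) l = 0 := by
  have h2' : IsLeftRegular (2 : MvPolynomial (Fin n) k) := by
    simpa only [map_ofNat] using (h2.map (C : k →+* MvPolynomial (Fin n) k)).isRegular.left
  simp only [schFnBiv, schFnTriv, sum_mul]
  rw [sum_comm]
  exact sum_sum_mul_mul_eq_zero_of_antisymm h2' (fun i j => T i j l) (fun i j => hT i j l) _

theorem unfolding_stmt13_general (K : Type*) [Field K] [CharZero K] (m : ℕ)
    (f : MvPolynomial (Fin m) K)
    (R : Type*) [CommRing R] [Algebra K R]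
    (p : MvPolynomial (Fin m) R)
    (T : Fin m → Fin m → Fin m → MvPolynomial (Fin m) R) (hT : IsAltTriv T)
    (hMC : ∀ i j l,
      schBivBiv (schFnTriv (MvPolynomial.map (algebraMap K R) f - p) T) i j l = 0) :
    (∀ l, schFnBiv (MvPolynomial.map (algebraMap K R) f - p)
        (schFnTriv (MvPolynomial.map (algebraMap K R) f - p) T) l = 0) ∧
    (∀ i j l,
      schBivBiv (schFnTriv (MvPolynomial.map (algebraMap K R) f - p) T) i j l = 0) := by
  have h2 : IsUnit (2 : R) := by
    simpa only [map_ofNat] using (isUnit_iff_ne_zero.2 (two_ne_zero (α := K))).map (algebraMap K R)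
  exact ⟨schFnBiv_schFnTriv_self h2 _ T fun i j l => (hT i j l).1, hMC⟩

/-- Let `k` be a field of characteristic zero, `A = k[x₁,…,xₙ]`, `f ∈ A`
with finite Milnor number, and `(R,𝔪)` a local Artinian `k`-algebra.  A solution of the
Maurer–Cartan equation in `𝔪 ⊗ 𝔤¹` (governing noncommutative unfoldings of `f`) is given by
any pair `(p, T)` with `p ∈ 𝔪 ⊗ A` and `T ∈ 𝔪 ⊗ Λ³_A T_A` satisfying
`[[f−p, T], [f−p, T]] = 0`, via `w = p∂_e + S` with `S := [f−p, T]`; i.e. `w` satisfies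
`[f−p, S] = 0` and `[S, S] = 0` (the componentwise form of the Maurer–Cartan equation). -/
theorem unfolding_stmt13 (K : Type*) [Field K] [CharZero K] (m : ℕ)
    (f : MvPolynomial (Fin m) K)
    (hμ : FiniteDimensional K
      (MvPolynomial (Fin m) K ⧸
        Ideal.span (Set.range fun i : Fin m => pderiv i f)))
    (R : Type*) [CommRing R] [Algebra K R] [IsArtinianRing R] [IsLocalRing R]
    (p : MvPolynomial (Fin m) R)
    (hp : ∀ c, p.coeff c ∈ IsLocalRing.maximalIdeal R)
    (T : Fin m → Fin m → Fin m → MvPolynomial (Fin m) R) (hT : IsAltTriv T)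
    (hTm : ∀ i j l c, (T i j l).coeff c ∈ IsLocalRing.maximalIdeal R)
    (hMC : ∀ i j l,
      schBivBiv (schFnTriv (MvPolynomial.map (algebraMap K R) f - p) T) i j l = 0) :
    (∀ l, schFnBiv (MvPolynomial.map (algebraMap K R) f - p)
        (schFnTriv (MvPolynomial.map (algebraMap K R) f - p) T) l = 0) ∧
    (∀ i j l,
      schBivBiv (schFnTriv (MvPolynomial.map (algebraMap K R) f - p) T) i j l = 0) :=
  unfolding_stmt13_general K m f R p T hT hMC
end

section
/- Let k be a commutative ring, and let f: A → A' be a surjective quasi-isomorphism of dg k-algebras, with A and A' cofibrant as complexes of k-modules. Define X as the pullback of the diagram Coder(A^∨) → Coder^f(A^∨, A'^∨) ← Coder(A'^∨), where A^∨ is the bar coalgebra of A and Coder^f denotes f-coderivations. Then the projections X → Coder(A^∨) and X → Coder(A'^∨) are quasi-isomorphisms of dg Lie algebras; hence the shifted Hochschild cochain complexes C(A)[1] and C(A')[1] are quasi-isomorphic as dg Lie algebras. -/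
/-- A chain map `g` between two modules-with-differential `(V, dV)`, `(W, dW)` is a
quasi-isomorphism iff it induces an isomorphism `ker/im → ker/im` on homology:
surjectivity and injectivity on homology classes, stated elementwise. -/
def IsQuasiIsoOfDiff {k V W : Type*} [CommRing k]
    [AddCommGroup V] [Module k V] [AddCommGroup W] [Module k W]
    (dV : V →ₗ[k] V) (dW : W →ₗ[k] W) (g : V →ₗ[k] W) : Prop :=
  (∀ w, dW w = 0 → ∃ v, dV v = 0 ∧ ∃ u, g v - w = dW u) ∧
  (∀ v, dV v = 0 → (∃ u, g v = dW u) → ∃ t, v = dV t)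

/-- (Comparison of Hochschild complexes.)  Let `k` be a commutative ring
and `f : A → A'` a surjective quasi-isomorphism of dg `k`-algebras, `A, A'` cofibrant as
complexes.  With `A^∨` the bar coalgebra of `A`, set `L₁ = Coder(A^∨) = C(A)[1]`,
`L₂ = Coder(A'^∨) = C(A')[1]` — dg Lie algebras under the commutator bracket — and
`M = Coder^f(A^∨, A'^∨)`, a complex with chain maps `φ : L₁ → M`, `ψ : L₂ → M` given by
post/pre-composition with `f^∨`; `φ` and `ψ` are quasi-isomorphisms and `φ` is surjective,
and for pairs matched under `(φ, ψ)` the brackets are matched as well.  Then, with `X`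
the pullback `{(a,b) | φ a = ψ b}` (with componentwise differential and bracket), `X` is
closed under the componentwise bracket and both projections `X → L₁`, `X → L₂` are
quasi-isomorphisms; hence `C(A)[1]` and `C(A')[1]` are quasi-isomorphic as dg Lie
algebras. -/
theorem unfolding_stmt18 (k : Type*) [CommRing k]
    (L₁ L₂ M : Type*)
    [LieRing L₁] [LieAlgebra k L₁] [LieRing L₂] [LieAlgebra k L₂]
    [AddCommGroup M] [Module k M]
    (d₁ : L₁ →ₗ[k] L₁) (d₂ : L₂ →ₗ[k] L₂) (dM : M →ₗ[k] M)
    (hd₁ : ∀ x, d₁ (d₁ x) = 0) (hd₂ : ∀ x, d₂ (d₂ x) = 0) (hdM : ∀ x, dM (dM x) = 0)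
    (φ : L₁ →ₗ[k] M) (ψ : L₂ →ₗ[k] M)
    (hφd : ∀ x, φ (d₁ x) = dM (φ x)) (hψd : ∀ x, ψ (d₂ x) = dM (ψ x))
    (hφq : IsQuasiIsoOfDiff d₁ dM φ) (hψq : IsQuasiIsoOfDiff d₂ dM ψ)
    (hφsurj : Function.Surjective φ)
    (hbr : ∀ a a' : L₁, ∀ b b' : L₂, φ a = ψ b → φ a' = ψ b' →
      φ ⁅a, a'⁆ = ψ ⁅b, b'⁆) :
    let Xs : Submodule k (L₁ × L₂) :=
      LinearMap.ker ((φ ∘ₗ LinearMap.fst k L₁ L₂) - (ψ ∘ₗ LinearMap.snd k L₁ L₂))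
    let dX : Xs →ₗ[k] Xs := (d₁.prodMap d₂).restrict (fun x hx => by
      simp only [Xs, LinearMap.mem_ker, LinearMap.sub_apply, LinearMap.comp_apply,
        LinearMap.fst_apply, LinearMap.snd_apply, LinearMap.prodMap_apply,
        Prod.map_fst, Prod.map_snd] at hx ⊢
      rw [hφd, hψd, ← map_sub, hx, map_zero])
    -- `X` is a Lie subalgebra (componentwise bracket):
    (∀ x y : L₁ × L₂, x ∈ Xs → y ∈ Xs → (⁅x.1, y.1⁆, ⁅x.2, y.2⁆) ∈ Xs) ∧
    -- both projections are quasi-isomorphisms: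
    IsQuasiIsoOfDiff dX d₁ ((LinearMap.fst k L₁ L₂) ∘ₗ Xs.subtype) ∧
    IsQuasiIsoOfDiff dX d₂ ((LinearMap.snd k L₁ L₂) ∘ₗ Xs.subtype) := by
  intro Xs dX
  have memX : ∀ x : L₁ × L₂, x ∈ Xs ↔ φ x.1 = ψ x.2 := by
    intro x
    simp [Xs, LinearMap.mem_ker, sub_eq_zero]
  have dX_coe : ∀ x : Xs, ((dX x : L₁ × L₂)) = (d₁ (x : L₁ × L₂).1, d₂ (x : L₁ × L₂).2) := by
    intro x; rfl
  refine ⟨?_, ⟨?_, ?_⟩, ?_, ?_⟩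
  · -- bracket closure
    intro x y hx hy
    rw [memX] at hx hy ⊢
    exact hbr _ _ _ _ hx hy
  · -- proj₁ surjective on homology
    intro a ha
    have hcyc : dM (φ a) = 0 := by rw [← hφd, ha, map_zero]
    obtain ⟨b, hb, u, hu⟩ := hψq.1 (φ a) hcyc
    obtain ⟨c, hc⟩ := hφsurj u
    have hmem : (a + d₁ c, b) ∈ Xs := by
      rw [memX]
      simp only
      rw [map_add, hφd, hc, ← hu]
      abel
    refine ⟨⟨(a + d₁ c, b), hmem⟩, ?_, c, ?_⟩
    · apply Subtype.ext
      rw [dX_coe]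
      simp [map_add, hd₁ c, ha, hb, Prod.ext_iff]
    · simp
  · -- proj₁ injective on homology
    rintro ⟨⟨a, b⟩, hab⟩ hv ⟨t, ht⟩
    rw [memX] at hab
    simp only at hab
    have hv' : d₁ a = 0 ∧ d₂ b = 0 := by
      have := congrArg Subtype.val hv
      rw [dX_coe] at this
      exact Prod.mk.injEq .. ▸ this
    simp only [LinearMap.comp_apply, Submodule.subtype_apply, LinearMap.fst_apply] at ht
    have hbcyc : d₂ b = 0 := hv'.2
    have hbbd : ∃ u, ψ b = dM u := ⟨φ t, by rw [← hab, ht, hφd]⟩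
    obtain ⟨s₂, hs₂⟩ := hψq.2 b hbcyc hbbd
    have he : dM (ψ s₂ - φ t) = 0 := by
      rw [map_sub, ← hψd, ← hφd, ← hs₂, ← ht, hab, sub_self]
    obtain ⟨c, hc, u, hu⟩ := hφq.1 (ψ s₂ - φ t) he
    obtain ⟨w, hw⟩ := hφsurj u
    have hmem : (t + c - d₁ w, s₂) ∈ Xs := by
      rw [memX]
      simp only
      rw [map_sub, map_add, hφd, hw, ← hu]
      abel
    refine ⟨⟨(t + c - d₁ w, s₂), hmem⟩, ?_⟩
    apply Subtype.ext
    rw [dX_coe]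
    simp only [map_sub, map_add, hd₁ w, hc, ← hs₂, ← ht]
    simp
  · -- proj₂ surjective on homology
    intro b hb
    have hcyc : dM (ψ b) = 0 := by rw [← hψd, hb, map_zero]
    obtain ⟨a, ha, u, hu⟩ := hφq.1 (ψ b) hcyc
    obtain ⟨c, hc⟩ := hφsurj u
    have hmem : (a - d₁ c, b) ∈ Xs := by
      rw [memX]
      simp only
      rw [map_sub, hφd, hc, ← hu]
      abel
    refine ⟨⟨(a - d₁ c, b), hmem⟩, ?_, 0, ?_⟩
    · apply Subtype.ext
      rw [dX_coe]
      simp [map_sub, hd₁ c, ha, hb, Prod.ext_iff]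
    · simp
  · -- proj₂ injective on homology
    rintro ⟨⟨a, b⟩, hab⟩ hv ⟨t, ht⟩
    rw [memX] at hab
    simp only at hab
    have hv' : d₁ a = 0 ∧ d₂ b = 0 := by
      have := congrArg Subtype.val hv
      rw [dX_coe] at this
      exact Prod.mk.injEq .. ▸ this
    simp only [LinearMap.comp_apply, Submodule.subtype_apply, LinearMap.snd_apply] at ht
    have habd : ∃ u, φ a = dM u := ⟨ψ t, by rw [hab, ht, hψd]⟩
    obtain ⟨s₁, hs₁⟩ := hφq.2 a hv'.1 habd
    have he : dM (ψ t - φ s₁) = 0 := by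
      rw [map_sub, ← hψd, ← hφd, ← hs₁, ← ht, hab, sub_self]
    obtain ⟨c, hc, u, hu⟩ := hψq.1 (ψ t - φ s₁) he
    obtain ⟨w, hw⟩ := hφsurj u
    have hmem : (s₁ - d₁ w, t - c) ∈ Xs := by
      rw [memX]
      simp only
      rw [map_sub, map_sub, hφd, hw, ← hu]
      abel
    refine ⟨⟨(s₁ - d₁ w, t - c), hmem⟩, ?_⟩
    apply Subtype.ext
    rw [dX_coe]
    simp only [map_sub, hd₁ w, hc, ← hs₁, ← ht]
    simp
end
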